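/- The function R(u;τ) := ∑_{ν ∈ 1/2+ℤ} (sgn(ν) − E((ν + Im(u)/Im(τ))·√(2 Im τ))) · (−1)^{ν−1/2} · e^{−πiν²τ} · e^{−2πiνu} satisfies R(u; τ) + e^{−2πiu − πiτ} R(u+τ; τ) = 2 e^{−πiu − πiτ/4} for all τ in the upper half plane and u ∈ ℂ. -/

import Mathlib

/-!
The shift `u ↦ u + τ` multiplies the theta factor `(-1)^n e^{-πiν²τ - 2πiνu}` of the `n`-th term
by `-e^{2πiu + πiτ}` and turns it into the theta factor of the `(n+1)`-st term; it also moves the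
argument of `E` to that of the `(n+1)`-st term. After reindexing, the two series therefore cancel
termwise, except for the jump of `sgn ν` between `ν = -1/2` and `ν = 1/2`, which leaves
`2 e^{-πiu - πiτ/4}`. Splitting the sum is legitimate because the series converges absolutely:
once `ν` and `ν + Im u / Im τ` have the same sign, `sgn ν - E(t)` is a Gaussian tail, at most
`2 e^{-πt²}`, and this beats the growth `e^{πν² Im τ}` of the theta factor.
-/

open scoped BigOperators

/-- `E(t) = 2∫₀ᵗ e^{−πu²} du`. -/
noncomputable def Efun (t : ℝ) : ℝ := 2 * ∫ u in (0:ℝ)..t, Real.exp (-Real.pi * u ^ 2)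

/-- Zwegers' function
`R(u;τ) = ∑_{ν ∈ 1/2+ℤ} (sgn(ν) − E((ν + Im u / Im τ)√(2 Im τ)))(−1)^{ν−1/2} e^{−πiν²τ} e^{−2πiνu}`,
indexed by `ν = n + 1/2`, `n ∈ ℤ`. -/
noncomputable def Rfun (u τ : ℂ) : ℂ :=
  ∑' n : ℤ,
    ((Real.sign ((n : ℝ) + 1/2)
        - Efun (((n : ℝ) + 1/2 + u.im / τ.im) * Real.sqrt (2 * τ.im)) : ℝ) : ℂ)
      * (-1 : ℂ) ^ n
      * Complex.exp (-Real.pi * Complex.I * ((n : ℂ) + 1/2) ^ 2 * τ)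
      * Complex.exp (-2 * Real.pi * Complex.I * ((n : ℂ) + 1/2) * u)

open MeasureTheory Set Filter Real

lemma Efun_neg (t : ℝ) : Efun (-t) = -Efun t := by
  have h := intervalIntegral.integral_comp_neg (a := 0) (b := t) fun x : ℝ ↦ exp (-π * x ^ 2)
  simp only [neg_sq, neg_zero] at h
  rw [Efun, Efun, h, intervalIntegral.integral_symm]
  ring

lemma one_sub_Efun (t : ℝ) : 1 - Efun t = 2 * ∫ x in Ioi t, exp (-π * x ^ 2) := by
  have hint : Integrable fun x : ℝ ↦ exp (-π * x ^ 2) := integrable_exp_neg_mul_sq pi_pos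
  have h := intervalIntegral.integral_Ioi_sub_Ioi' (a := 0) (b := t) hint.integrableOn
    hint.integrableOn
  rw [integral_gaussian_Ioi, div_self pi_ne_zero, sqrt_one] at h
  rw [Efun, ← h]
  ring

lemma setIntegral_Ioi_exp_neg_pi_mul_sq_le {t : ℝ} (ht : 0 ≤ t) :
    ∫ x in Ioi t, exp (-π * x ^ 2) ≤ exp (-π * t ^ 2) := by
  have hshift : Integrable fun x : ℝ ↦ exp (-π * (x - t) ^ 2) :=
    (integrable_exp_neg_mul_sq pi_pos).comp_sub_right t
  calc ∫ x in Ioi t, exp (-π * x ^ 2)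
      ≤ ∫ x in Ioi t, exp (-π * t ^ 2) * exp (-π * (x - t) ^ 2) := by
        refine setIntegral_mono_on (integrable_exp_neg_mul_sq pi_pos).integrableOn
          (hshift.const_mul _).integrableOn measurableSet_Ioi fun x (hx : t < x) ↦ ?_
        -- `x² ≥ t² + (x - t)²` for `0 ≤ t ≤ x`
        rw [← exp_add, exp_le_exp]
        nlinarith [mul_nonneg pi_pos.le (mul_nonneg ht (sub_nonneg.2 hx.le))]
    _ ≤ exp (-π * t ^ 2) * ∫ x, exp (-π * (x - t) ^ 2) := by
        rw [integral_const_mul]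
        exact mul_le_mul_of_nonneg_left
          (setIntegral_le_integral hshift (.of_forall fun x ↦ (exp_pos _).le)) (exp_pos _).le
    _ = exp (-π * t ^ 2) := by
        rw [integral_sub_right_eq_self (fun x ↦ exp (-π * x ^ 2)), integral_gaussian,
          div_self pi_ne_zero, sqrt_one, mul_one]

lemma abs_sign_sub_Efun_le {x t : ℝ} (hxt : 0 < x * t) :
    |Real.sign x - Efun t| ≤ 2 * exp (-π * t ^ 2) := by
  have tail {s : ℝ} (hs : 0 ≤ s) : |1 - Efun s| ≤ 2 * exp (-π * s ^ 2) := by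
    have hnonneg : 0 ≤ ∫ x in Ioi s, exp (-π * x ^ 2) :=
      setIntegral_nonneg measurableSet_Ioi fun x _ ↦ (exp_pos _).le
    rw [one_sub_Efun, abs_of_nonneg (by positivity)]
    linarith [setIntegral_Ioi_exp_neg_pi_mul_sq_le hs]
  rcases lt_or_gt_of_ne (left_ne_zero_of_mul hxt.ne') with hx | hx
  · have ht : t < 0 := neg_of_mul_pos_right hxt hx.le
    rw [Real.sign_of_neg hx, show -1 - Efun t = -(1 - Efun (-t)) by rw [Efun_neg]; ring,
      abs_neg, ← neg_sq t]
    exact tail (neg_nonneg.2 ht.le)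
  · rw [Real.sign_of_pos hx]
    exact tail (pos_of_mul_pos_right hxt hx.le).le

open Complex in
noncomputable def thetaTerm (u τ : ℂ) (n : ℤ) : ℂ :=
  (-1 : ℂ) ^ n * cexp (-π * I * ((n : ℂ) + 1/2) ^ 2 * τ)
    * cexp (-2 * π * I * ((n : ℂ) + 1/2) * u)

noncomputable def Rcoeff (u τ : ℂ) (n : ℤ) : ℝ :=
  Real.sign ((n : ℝ) + 1/2) - Efun (((n : ℝ) + 1/2 + u.im / τ.im) * √(2 * τ.im))

noncomputable def Rterm (u τ : ℂ) (n : ℤ) : ℂ := Rcoeff u τ n * thetaTerm u τ n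

lemma Rfun_eq_tsum (u τ : ℂ) : Rfun u τ = ∑' n, Rterm u τ n := by
  simp only [Rfun, Rterm, Rcoeff, thetaTerm, mul_assoc]

lemma norm_thetaTerm (u τ : ℂ) (n : ℤ) :
    ‖thetaTerm u τ n‖
      = exp (π * ((n : ℝ) + 1/2) ^ 2 * τ.im + 2 * π * ((n : ℝ) + 1/2) * u.im) := by
  have re_ofReal_mul_I_mul (r : ℝ) (z : ℂ) : ((r : ℂ) * Complex.I * z).re = -(r * z.im) := by
    simp [Complex.mul_re]
  have h₁ : -π * Complex.I * ((n : ℂ) + 1/2) ^ 2 * τ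
      = ((-π * ((n : ℝ) + 1/2) ^ 2 : ℝ) : ℂ) * Complex.I * τ := by push_cast; ring
  have h₂ : -2 * π * Complex.I * ((n : ℂ) + 1/2) * u
      = ((-2 * π * ((n : ℝ) + 1/2) : ℝ) : ℂ) * Complex.I * u := by push_cast; ring
  rw [thetaTerm, norm_mul, norm_mul, norm_zpow, Complex.norm_exp, Complex.norm_exp, h₁, h₂,
    re_ofReal_mul_I_mul, re_ofReal_mul_I_mul, exp_add]
  simp only [norm_neg, norm_one, one_zpow, one_mul]
  ring_nf

lemma norm_Rterm_le {u τ : ℂ} (hτ : 0 < τ.im) {n : ℤ}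
    (hn : 0 < ((n : ℝ) + 1/2) * ((n : ℝ) + 1/2 + u.im / τ.im)) :
    ‖Rterm u τ n‖ ≤ 2 * exp (-π * ((n : ℝ) + (1/2 + u.im / τ.im)) ^ 2 * τ.im) := by
  set c := u.im / τ.im
  set ν : ℝ := (n : ℝ) + 1/2
  have hcy : u.im = c * τ.im := (div_mul_cancel₀ _ hτ.ne').symm
  have hs : √(2 * τ.im) ^ 2 = 2 * τ.im := sq_sqrt (by positivity)
  have hcoeff : |Rcoeff u τ n| ≤ 2 * exp (-π * ((ν + c) * √(2 * τ.im)) ^ 2) :=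
    abs_sign_sub_Efun_le (by rw [← mul_assoc]; exact mul_pos hn (sqrt_pos.2 (by positivity)))
  rw [Rterm, norm_mul, Complex.norm_real, Real.norm_eq_abs, norm_thetaTerm]
  calc |Rcoeff u τ n| * exp (π * ν ^ 2 * τ.im + 2 * π * ν * u.im)
      ≤ 2 * exp (-π * ((ν + c) * √(2 * τ.im)) ^ 2)
          * exp (π * ν ^ 2 * τ.im + 2 * π * ν * u.im) := by
        gcongr
    _ ≤ 2 * exp (-π * (ν + c) ^ 2 * τ.im) := by
        rw [mul_assoc, ← exp_add, mul_pow, hs, hcy]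
        gcongr
        nlinarith [mul_nonneg (mul_nonneg pi_pos.le hτ.le) (sq_nonneg c)]
    _ = 2 * exp (-π * ((n : ℝ) + (1/2 + c)) ^ 2 * τ.im) := by simp only [ν, add_assoc]

lemma finite_setOf_mul_add_nonpos (c : ℝ) :
    {n : ℤ | ¬ 0 < ((n : ℝ) + 1/2) * ((n : ℝ) + 1/2 + c)}.Finite := by
  refine (finite_Icc (-⌈|c|⌉ - 1) ⌈|c|⌉).subset fun n hn ↦ ?_
  have hn : ((n : ℝ) + 1/2) * ((n : ℝ) + 1/2 + c) ≤ 0 := not_lt.1 hn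
  have hc := Int.le_ceil |c|
  have lower : ((-⌈|c|⌉ - 1 : ℤ) : ℝ) ≤ n := by
    push_cast; nlinarith [le_abs_self c, neg_abs_le c]
  have upper : (n : ℝ) ≤ ⌈|c|⌉ := by nlinarith [le_abs_self c, neg_abs_le c]
  exact ⟨Int.cast_le.1 lower, Int.cast_le.1 upper⟩

lemma summable_Rterm {u τ : ℂ} (hτ : 0 < τ.im) : Summable (Rterm u τ) := by
  refine .of_norm_bounded_eventually
    ((HurwitzKernelBounds.summable_f_int 0 (1/2 + u.im / τ.im) hτ).mul_left 2) ?_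
  filter_upwards [eventually_cofinite.2 (finite_setOf_mul_add_nonpos (u.im / τ.im))] with n hn
  simpa [HurwitzKernelBounds.f_int] using norm_Rterm_le hτ hn

lemma tsum_add_tsum_of_add_shift_eq_ite {α : Type*} [AddCommGroup α] [TopologicalSpace α]
    [IsTopologicalAddGroup α] [T2Space α] {a b : ℤ → α} {c : α} (ha : Summable a)
    (hab : ∀ m, a m + b (m - 1) = if m = 0 then c else 0) :
    ∑' n, a n + ∑' n, b n = c := by
  have hb : Summable fun m ↦ b (m - 1) := by
    simp_rw [fun m ↦ eq_sub_of_add_eq' (hab m)]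
    exact (hasSum_ite_eq 0 c).summable.sub ha
  rw [← (Equiv.subRight 1).tsum_eq b]
  simp only [Equiv.subRight_apply]
  rw [← ha.tsum_add hb, tsum_congr hab, tsum_ite_eq]

lemma sign_add_half_sub_sign_sub_half (m : ℤ) :
    Real.sign ((m : ℝ) + 1/2) - Real.sign ((m : ℝ) - 1/2) = if m = 0 then 2 else 0 := by
  rcases lt_trichotomy m 0 with hm | rfl | hm
  · have : (m : ℝ) ≤ -1 := by exact_mod_cast Int.le_sub_one_of_lt hm
    rw [Real.sign_of_neg (by linarith), Real.sign_of_neg (by linarith), if_neg hm.ne]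
    ring
  · rw [Real.sign_of_pos (by norm_num), Real.sign_of_neg (by norm_num)]
    norm_num
  · have : (1 : ℝ) ≤ m := by exact_mod_cast hm
    rw [Real.sign_of_pos (by linarith), Real.sign_of_pos (by linarith), if_neg hm.ne']
    ring

lemma Rcoeff_sub_Rcoeff_add_tau {τ : ℂ} (hτ : τ.im ≠ 0) (u : ℂ) (m : ℤ) :
    Rcoeff u τ m - Rcoeff (u + τ) τ (m - 1)
      = Real.sign ((m : ℝ) + 1/2) - Real.sign ((m : ℝ) - 1/2) := by
  have harg : ((m - 1 : ℤ) : ℝ) + 1/2 + (u + τ).im / τ.im = (m : ℝ) + 1/2 + u.im / τ.im := by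
    rw [Complex.add_im, add_div, div_self hτ]
    push_cast
    ring
  rw [Rcoeff, Rcoeff, harg, show ((m - 1 : ℤ) : ℝ) + 1/2 = (m : ℝ) - 1/2 by push_cast; ring]
  ring

open Complex in
lemma exp_mul_thetaTerm_add_tau (u τ : ℂ) (m : ℤ) :
    cexp (-2 * π * I * u - π * I * τ) * thetaTerm (u + τ) τ (m - 1) = -thetaTerm u τ m := by
  have hsign : (-1 : ℂ) ^ (m - 1) = -(-1) ^ m := by
    rw [zpow_sub_one₀ (by norm_num), inv_neg, inv_one, mul_neg_one]
  have hexp : cexp (-2 * π * I * u - π * I * τ)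
        * cexp (-π * I * (((m - 1 : ℤ) : ℂ) + 1/2) ^ 2 * τ)
        * cexp (-2 * π * I * (((m - 1 : ℤ) : ℂ) + 1/2) * (u + τ))
      = cexp (-π * I * ((m : ℂ) + 1/2) ^ 2 * τ) * cexp (-2 * π * I * ((m : ℂ) + 1/2) * u) := by
    simp only [← Complex.exp_add]
    push_cast
    ring_nf
  rw [thetaTerm, thetaTerm, hsign]
  linear_combination (-(-1 : ℂ) ^ m) * hexp

open Complex in
lemma thetaTerm_zero (u τ : ℂ) : thetaTerm u τ 0 = cexp (-π * I * u - π * I * τ / 4) := by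
  rw [thetaTerm, zpow_zero, one_mul, ← Complex.exp_add]
  push_cast
  ring_nf

open Complex in
lemma Rterm_add_exp_mul_Rterm_add_tau {τ : ℂ} (hτ : τ.im ≠ 0) (u : ℂ) (m : ℤ) :
    Rterm u τ m + cexp (-2 * π * I * u - π * I * τ) * Rterm (u + τ) τ (m - 1)
      = if m = 0 then 2 * cexp (-π * I * u - π * I * τ / 4) else 0 := by
  have hcoeff := congrArg ((↑) : ℝ → ℂ) ((Rcoeff_sub_Rcoeff_add_tau hτ u m).trans
    (sign_add_half_sub_sign_sub_half m))
  rw [Rterm, Rterm, mul_left_comm, exp_mul_thetaTerm_add_tau]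
  split_ifs at hcoeff ⊢ with hm
  · simp only [Complex.ofReal_sub, Complex.ofReal_ofNat] at hcoeff
    rw [← thetaTerm_zero, ← hm]
    linear_combination thetaTerm u τ m * hcoeff
  · simp only [Complex.ofReal_sub, Complex.ofReal_zero] at hcoeff
    linear_combination thetaTerm u τ m * hcoeff

/-- `R(u; τ) + e^{−2πiu − πiτ} R(u+τ; τ) = 2 e^{−πiu − πiτ/4}`. -/
theorem Rfun_add_tau (τ u : ℂ) (hτ : 0 < τ.im) :
    Rfun u τ + Complex.exp (-2 * Real.pi * Complex.I * u - Real.pi * Complex.I * τ)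
        * Rfun (u + τ) τ
      = 2 * Complex.exp (-Real.pi * Complex.I * u - Real.pi * Complex.I * τ / 4) := by
  rw [Rfun_eq_tsum, Rfun_eq_tsum, ← tsum_mul_left]
  exact tsum_add_tsum_of_add_shift_eq_ite (summable_Rterm hτ)
    (Rterm_add_exp_mul_Rterm_add_tau hτ.ne' u)
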